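/- Let Φ be a root system of type ADE (simply-laced) of rank n ≥ 2 in ℝ^n. Then every type-2 decomposition of Φ into subsets Φ_1, …, Φ_{s+t} satisfies Σ_{l=1}^{s+t} rank Φ_l ≥ 2n − 1, where rank Φ_l := dim_ℝ span_ℝ Φ_l. -/

import Mathlib

noncomputable section

/-- The standard inner product on `ℝ^d`. -/
def dotR {d : ℕ} (x y : Fin d → ℝ) : ℝ := ∑ i, x i * y i

/-- `Φ` is a root system in `ℝ^d`: a finite set of nonzero vectors spanning `ℝ^d`,
closed under the reflections `s_α`, with integral Cartan numbers. -/
def IsRootSystem {d : ℕ} (Φ : Finset (Fin d → ℝ)) : Prop :=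
  (∀ α ∈ Φ, α ≠ 0) ∧
  Submodule.span ℝ (Φ : Set (Fin d → ℝ)) = ⊤ ∧
  (∀ α ∈ Φ, ∀ β ∈ Φ, β - (2 * dotR β α / dotR α α) • α ∈ Φ) ∧
  (∀ α ∈ Φ, ∀ β ∈ Φ, ∃ n : ℤ, 2 * dotR β α / dotR α α = (n : ℝ))

/-- `Φ` is reduced: the only multiples of a root `α` in `Φ` are `±α`. -/
def IsReducedRS {d : ℕ} (Φ : Finset (Fin d → ℝ)) : Prop :=
  ∀ α ∈ Φ, ∀ t : ℝ, t • α ∈ Φ → t = 1 ∨ t = -1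

/-- `Φ` is irreducible: it is not the disjoint union of two nonempty mutually
orthogonal subsets. -/
def IsIrreducibleRS {d : ℕ} (Φ : Finset (Fin d → ℝ)) : Prop :=
  ∀ A B : Set (Fin d → ℝ), (Φ : Set (Fin d → ℝ)) = A ∪ B → Disjoint A B →
    (∀ a ∈ A, ∀ b ∈ B, dotR a b = 0) → A = ∅ ∨ B = ∅


namespace Stmt5


variable {d : ℕ}

lemma dotR_comm (x y : Fin d → ℝ) : dotR x y = dotR y x := by
  unfold dotR; exact Finset.sum_congr rfl fun i _ => mul_comm _ _

lemma dotR_add_left (x y z : Fin d → ℝ) : dotR (x + y) z = dotR x z + dotR y z := by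
  unfold dotR; rw [← Finset.sum_add_distrib]
  exact Finset.sum_congr rfl fun i _ => by simp [add_mul]

lemma dotR_add_right (x y z : Fin d → ℝ) : dotR x (y + z) = dotR x y + dotR x z := by
  rw [dotR_comm, dotR_add_left, dotR_comm y x, dotR_comm z x]

lemma dotR_smul_left (c : ℝ) (x y : Fin d → ℝ) : dotR (c • x) y = c * dotR x y := by
  unfold dotR; rw [Finset.mul_sum]
  exact Finset.sum_congr rfl fun i _ => by simp [mul_assoc]

lemma dotR_smul_right (c : ℝ) (x y : Fin d → ℝ) : dotR x (c • y) = c * dotR x y := by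
  rw [dotR_comm, dotR_smul_left, dotR_comm y x]

lemma dotR_sub_left (x y z : Fin d → ℝ) : dotR (x - y) z = dotR x z - dotR y z := by
  have : x - y + y = x := sub_add_cancel x y
  have h := dotR_add_left (x - y) y z
  rw [this] at h; linarith

lemma dotR_sub_right (x y z : Fin d → ℝ) : dotR x (y - z) = dotR x y - dotR x z := by
  rw [dotR_comm, dotR_sub_left, dotR_comm y x, dotR_comm z x]

lemma dotR_zero_right (x : Fin d → ℝ) : dotR x 0 = 0 := by
  unfold dotR; simp

lemma dotR_zero_left (x : Fin d → ℝ) : dotR 0 x = 0 := by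
  rw [dotR_comm, dotR_zero_right]

lemma dotR_neg_right (x y : Fin d → ℝ) : dotR x (-y) = -dotR x y := by
  have := dotR_sub_right x 0 y; simpa [dotR_zero_right] using this

lemma dotR_self_nonneg (x : Fin d → ℝ) : 0 ≤ dotR x x :=
  Finset.sum_nonneg fun i _ => mul_self_nonneg _

lemma dotR_self_eq_zero {x : Fin d → ℝ} (h : dotR x x = 0) : x = 0 := by
  have := (Finset.sum_eq_zero_iff_of_nonneg (fun i _ => mul_self_nonneg (x i))).1 h
  funext i
  exact mul_self_eq_zero.1 (this i (Finset.mem_univ i))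

lemma dotR_self_pos {x : Fin d → ℝ} (h : x ≠ 0) : 0 < dotR x x :=
  lt_of_le_of_ne (dotR_self_nonneg x) fun h' => h (dotR_self_eq_zero h'.symm)

lemma dotR_sq_le (x y : Fin d → ℝ) : dotR x y ^ 2 ≤ dotR x x * dotR y y := by
  have := Finset.sum_mul_sq_le_sq_mul_sq Finset.univ x y
  unfold dotR
  calc (∑ i, x i * y i) ^ 2 ≤ (∑ i, x i ^ 2) * ∑ i, y i ^ 2 := this
    _ = (∑ i, x i * x i) * ∑ i, y i * y i := by simp [sq]

lemma dotR_span_zero {s : Set (Fin d → ℝ)} {x : Fin d → ℝ}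
    (h : ∀ y ∈ s, dotR x y = 0) {v : Fin d → ℝ} (hv : v ∈ Submodule.span ℝ s) :
    dotR x v = 0 := by
  induction hv using Submodule.span_induction with
  | mem y hy => exact h y hy
  | zero => exact dotR_zero_right x
  | add a b _ _ ha hb => rw [dotR_add_right, ha, hb, add_zero]
  | smul c a _ ha => rw [dotR_smul_right, ha, mul_zero]


variable {Φ : Finset (Fin d → ℝ)}

lemma root_step (hRS : IsRootSystem Φ)
    (hADE : ∀ α ∈ Φ, ∀ β ∈ Φ, dotR α α = dotR β β)
    {α β : Fin d → ℝ} (hα : α ∈ Φ) (hβ : β ∈ Φ)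
    (hd : dotR β α ≠ 0) (h1 : β ≠ α) (h2 : β ≠ -α) :
    ∃ k : ℝ, (k = 1 ∨ k = -1) ∧ dotR β α = k * dotR α α / 2 ∧ β - k • α ∈ Φ := by
  have hα0 : α ≠ 0 := hRS.1 α hα
  have hL : 0 < dotR α α := dotR_self_pos hα0
  set L := dotR α α with hLdef
  have hLβ : dotR β β = L := (hADE α hα β hβ).symm
  obtain ⟨z, hz⟩ := hRS.2.2.2 α hα β hβ
  have hzL : dotR β α = z * L / 2 := by
    rw [← hLdef, div_eq_iff hL.ne'] at hz; linarith [hz]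
  have hCS : dotR β α ^ 2 ≤ L * L := by
    have := dotR_sq_le β α; rw [hLβ] at this; linarith
  have hsq : dotR β α ^2 = (z:ℝ)^2 * L^2/4 := by rw [hzL]; ring
  have hz2 : (z : ℝ) ^ 2 ≤ 4 := by nlinarith [mul_pos hL hL]
  have hzb1 : (-2:ℤ) ≤ z := by
    have : (-2:ℝ) ≤ (z:ℝ) := by nlinarith
    exact_mod_cast this
  have hzb2 : z ≤ 2 := by
    have : (z:ℝ) ≤ 2 := by nlinarith
    exact_mod_cast this
  have hz0 : z ≠ 0 := by
    rintro rfl; apply hd; rw [hzL]; push_cast; ring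
  have hne2 : z ≠ 2 := by
    rintro rfl
    have hba : dotR β α = L := by rw [hzL]; push_cast; ring
    have hzero : dotR (β - α) (β - α) = 0 := by
      rw [dotR_sub_left, dotR_sub_right, dotR_sub_right, hLβ, hba, dotR_comm α β, hba]
      ring
    exact h1 (by have := dotR_self_eq_zero hzero; rwa [sub_eq_zero] at this)
  have hnem2 : z ≠ -2 := by
    rintro rfl
    have hba : dotR β α = -L := by rw [hzL]; push_cast; ring
    have hzero : dotR (β + α) (β + α) = 0 := by
      rw [dotR_add_left, dotR_add_right, dotR_add_right, hLβ, hba, dotR_comm α β, hba]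
      ring
    have := dotR_self_eq_zero hzero
    exact h2 (by linear_combination (norm := abel) this)
  have hmem := hRS.2.2.1 α hα β hβ
  rw [hz] at hmem
  refine ⟨(z:ℝ), ?_, hzL, hmem⟩
  interval_cases z
  · exact absurd rfl hnem2
  · right; norm_num
  · exact absurd rfl hz0
  · left; norm_num
  · exact absurd rfl hne2

/-- helper: recover a from k•a ∈ M when k = ±1 -/
lemma smul_mem_iff' {M : Submodule ℝ (Fin d → ℝ)} {k : ℝ} (hk : k = 1 ∨ k = -1)
    {a : Fin d → ℝ} (h : k • a ∈ M) : a ∈ M := by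
  have hkk : k * k = 1 := by rcases hk with rfl | rfl <;> norm_num
  have : a = k • (k • a) := by rw [smul_smul, hkk, one_smul]
  rw [this]; exact M.smul_mem k h

/-- **F lemma**: for a proper subspace Z, the roots outside Z span everything. -/
lemma span_compl (hRS : IsRootSystem Φ) (hirr : IsIrreducibleRS Φ)
    (hADE : ∀ α ∈ Φ, ∀ β ∈ Φ, dotR α α = dotR β β)
    {Z : Submodule ℝ (Fin d → ℝ)} (hZ : Z ≠ ⊤) :
    Submodule.span ℝ {φ | φ ∈ Φ ∧ φ ∉ Z} = ⊤ := by
  by_contra hT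
  set B : Set (Fin d → ℝ) := {φ | φ ∈ Φ ∧ φ ∉ Z} with hBdef
  set T := Submodule.span ℝ B with hTdef
  have hBT : ∀ b ∈ Φ, b ∉ Z → b ∈ T := fun b hb hbZ => Submodule.subset_span ⟨hb, hbZ⟩
  have hAZ : ∀ a ∈ Φ, a ∉ T → a ∈ Z := by
    intro a ha hna; by_contra h; exact hna (hBT a ha h)
  -- step 1
  have step1 : ∀ a ∈ Φ, a ∉ T → ∀ b ∈ Φ, b ∉ Z → dotR a b = 0 := by
    intro a ha haT b hb hbZ
    by_contra hdot
    have hd' : dotR b a ≠ 0 := fun h => hdot (by rw [dotR_comm]; exact h)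
    have haZ : a ∈ Z := hAZ a ha haT
    have h1 : b ≠ a := fun h => hbZ (h ▸ haZ)
    have h2 : b ≠ -a := fun h => hbZ (h ▸ Z.neg_mem haZ)
    obtain ⟨k, hk, _, hmem⟩ := root_step hRS hADE ha hb hd' h1 h2
    set c := b - k • a with hcdef
    have hcT : c ∉ T := by
      intro hcT
      apply haT
      have : k • a ∈ T := by
        have : k • a = b - c := by rw [hcdef]; abel
        rw [this]; exact T.sub_mem (hBT b hb hbZ) hcT
      exact smul_mem_iff' hk this
    have hcZ : c ∈ Z := hAZ c hmem hcT
    apply hbZ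
    have : b = c + k • a := by rw [hcdef]; abel
    rw [this]; exact Z.add_mem hcZ (Z.smul_mem k haZ)
  -- step 2
  have step2 : ∀ a ∈ Φ, a ∉ T → ∀ b ∈ Φ, b ∈ T → dotR a b = 0 := by
    intro a ha haT b hb hbT
    by_contra hdot
    have hd' : dotR b a ≠ 0 := fun h => hdot (by rw [dotR_comm]; exact h)
    have h1 : b ≠ a := fun h => haT (h ▸ hbT)
    have h2 : b ≠ -a := by
      intro h
      apply haT
      have : a = -b := by rw [h]; abel
      rw [this]; exact T.neg_mem hbT
    obtain ⟨k, hk, _, hmem⟩ := root_step hRS hADE ha hb hd' h1 h2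
    set c := b - k • a with hcdef
    have hcT : c ∉ T := by
      intro hcT
      apply haT
      have : k • a ∈ T := by
        have : k • a = b - c := by rw [hcdef]; abel
        rw [this]; exact T.sub_mem hbT hcT
      exact smul_mem_iff' hk this
    -- b ⊥ every element of B
    have hborth : ∀ y ∈ B, dotR b y = 0 := by
      intro y hy
      have e : b = c + k • a := by rw [hcdef]; abel
      rw [e, dotR_add_left, dotR_smul_left,
        step1 c hmem hcT y hy.1 hy.2, step1 a ha haT y hy.1 hy.2]
      ring
    have : dotR b b = 0 := dotR_span_zero hborth hbT
    exact hRS.1 b hb (dotR_self_eq_zero this)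
  -- irreducibility
  have := hirr {φ | φ ∈ Φ ∧ φ ∉ T} {φ | φ ∈ Φ ∧ φ ∈ T} ?_ ?_ ?_
  · rcases this with hA | hB2
    · apply hT
      apply top_unique
      rw [← hRS.2.1]
      apply Submodule.span_le.2
      intro φ hφ
      by_contra hφT
      have : φ ∈ ({φ | φ ∈ Φ ∧ φ ∉ T} : Set (Fin d → ℝ)) := ⟨hφ, hφT⟩
      rw [hA] at this; exact this
    · apply hZ
      apply top_unique
      rw [← hRS.2.1]
      apply Submodule.span_le.2
      intro φ hφ
      by_contra hφZ
      have : φ ∈ ({φ | φ ∈ Φ ∧ φ ∈ T} : Set (Fin d → ℝ)) := ⟨hφ, hBT φ hφ hφZ⟩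
      rw [hB2] at this; exact this
  · ext φ
    simp only [Set.mem_union, Set.mem_setOf_eq, Finset.coe_sort_coe, Finset.mem_coe]
    constructor
    · intro h; by_cases hT' : φ ∈ T
      · exact Or.inr ⟨h, hT'⟩
      · exact Or.inl ⟨h, hT'⟩
    · rintro (h | h) <;> exact h.1
  · rw [Set.disjoint_left]
    rintro φ ⟨_, h1⟩ ⟨_, h2⟩; exact h1 h2
  · rintro a ⟨ha, haT⟩ b ⟨hb, hbT⟩
    exact step2 a ha haT b hb hbT

open Module

lemma finrank_sup_le' (p q : Submodule ℝ (Fin d → ℝ)) :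
    finrank ℝ ↥(p ⊔ q) ≤ finrank ℝ p + finrank ℝ q := by
  have := Submodule.finrank_sup_add_finrank_inf_eq p q
  omega

lemma master_core (hRS : IsRootSystem Φ) (hirr : IsIrreducibleRS Φ)
    (hADE : ∀ α ∈ Φ, ∀ β ∈ Φ, dotR α α = dotR β β)
    {A B C : Submodule ℝ (Fin d → ℝ)}
    (hAC : A ⊔ C = ⊤)
    (hcov : ∀ φ ∈ Φ, φ ∈ A ∨ φ ∈ B ∨ φ ∈ C)
    {α β : Fin d → ℝ} (hαΦ : α ∈ Φ) (hαA : α ∈ A) (hαB : α ∉ B) (hαC : α ∉ C)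
    (hβΦ : β ∈ Φ) (hβB : β ∈ B) (hβA : β ∉ A) (hβC : β ∉ C)
    (hβα : dotR β α ≠ 0) :
    2 * d ≤ 1 + finrank ℝ A + finrank ℝ B + finrank ℝ C := by
  have hα0 : α ≠ 0 := hRS.1 α hαΦ
  have hL : 0 < dotR α α := dotR_self_pos hα0
  set L := dotR α α with hLdef
  have hADE' : ∀ φ ∈ Φ, dotR φ φ = L := fun φ hφ => (hADE α hαΦ φ hφ).symm
  set T := (Submodule.span ℝ {α}) ⊔ B ⊔ (A ⊓ C) with hTdef
  have hαT : α ∈ T := by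
    apply Submodule.mem_sup_left; apply Submodule.mem_sup_left
    exact Submodule.mem_span_singleton_self α
  have hBT : B ≤ T := le_trans le_sup_right le_sup_left
  have hACT : A ⊓ C ≤ T := le_sup_right
  set Z := Submodule.span ℝ {φ | φ ∈ Φ ∧ dotR φ α = 0} with hZdef
  have hZtop : Z ≠ ⊤ := by
    intro h
    have hmem : α ∈ Z := by rw [h]; trivial
    have horth : ∀ y ∈ {φ | φ ∈ Φ ∧ dotR φ α = 0}, dotR α y = 0 := fun y hy => by
      rw [dotR_comm]; exact hy.2
    exact hL.ne' (dotR_span_zero horth hmem)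
  have claim : ∀ φ ∈ Φ, φ ∉ Z → φ ∈ T := by
    intro φ hφΦ hφZ
    have hφα : dotR φ α ≠ 0 := fun h => hφZ (Submodule.subset_span ⟨hφΦ, h⟩)
    by_cases hφB : φ ∈ B
    · exact hBT hφB
    by_cases hφA : φ ∈ A
    · by_cases hφC : φ ∈ C
      · exact hACT ⟨hφA, hφC⟩
      by_cases hφa : φ = α
      · rw [hφa]; exact hαT
      by_cases hφa' : φ = -α
      · rw [hφa']; exact T.neg_mem hαT
      have hβa : β ≠ α := fun h => hβA (h ▸ hαA)
      have hβa' : β ≠ -α := fun h => hβA (h ▸ A.neg_mem hαA)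
      obtain ⟨k, hk, hkd, hγΦ⟩ := root_step hRS hADE hαΦ hβΦ hβα hβa hβa'
      have hkk : k * k = 1 := by rcases hk with rfl|rfl <;> norm_num
      set γ := β - k • α with hγdef
      have hγA : γ ∉ A := by
        intro h; apply hβA
        have e : β = γ + k • α := by rw [hγdef]; abel
        rw [e]; exact A.add_mem h (A.smul_mem k hαA)
      have hγB : γ ∉ B := by
        intro h; apply hαB
        apply smul_mem_iff' hk
        have e : k • α = β - γ := by rw [hγdef]; abel
        rw [e]; exact B.sub_mem hβB h
      have hγC : γ ∈ C := by
        rcases hcov γ hγΦ with h|h|h; exacts [absurd h hγA, absurd h hγB, h]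
      have hγT : γ ∈ T := by
        rw [hγdef]; exact T.sub_mem (hBT hβB) (T.smul_mem k hαT)
      obtain ⟨k1, hk1, hk1d, -⟩ := root_step hRS hADE hαΦ hφΦ hφα hφa hφa'
      have hk1k : k1 * k1 = 1 := by rcases hk1 with rfl|rfl <;> norm_num
      by_cases hφβ : dotR φ β = 0
      · -- δ := γ - kt • φ lands in B
        have hγφval : dotR γ φ = -(k * k1 * L) / 2 := by
          rw [hγdef, dotR_sub_left, dotR_smul_left, dotR_comm β φ, hφβ, dotR_comm α φ, hk1d]
          ring
        have hγφ : dotR γ φ ≠ 0 := by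
          rw [hγφval]
          rcases hk with rfl|rfl <;> rcases hk1 with rfl|rfl <;>
            intro hc <;> rw [div_eq_zero_iff] at hc <;>
            [skip; skip; skip; skip] <;> rcases hc with hc|hc <;> nlinarith
        have hne1 : γ ≠ φ := fun h => hφC (h ▸ hγC)
        have hne2 : γ ≠ -φ := by
          intro h; apply hφC
          have e : φ = -γ := by rw [h]; abel
          rw [e]; exact C.neg_mem hγC
        obtain ⟨kt, hkt, hktd, hδΦ⟩ := root_step hRS hADE hφΦ hγΦ hγφ hne1 hne2
        have hktk : kt * kt = 1 := by rcases hkt with rfl|rfl <;> norm_num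
        set δ := γ - kt • φ with hδdef
        have hδA : δ ∉ A := by
          intro h; apply hγA
          have e : γ = δ + kt • φ := by rw [hδdef]; abel
          rw [e]; exact A.add_mem h (A.smul_mem kt hφA)
        have hδC : δ ∉ C := by
          intro h; apply hφC
          apply smul_mem_iff' hkt
          have e : kt • φ = γ - δ := by rw [hδdef]; abel
          rw [e]; exact C.sub_mem hγC h
        have hδB : δ ∈ B := by
          rcases hcov δ hδΦ with h|h|h; exacts [absurd h hδA, h, absurd h hδC]
        have e1 : γ - δ = kt • φ := by rw [hδdef]; abel
        have hm := T.smul_mem kt (T.sub_mem hγT (hBT hδB))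
        rw [e1, smul_smul, hktk, one_smul] at hm
        exact hm
      · -- second subcase
        have hβφ : dotR β φ ≠ 0 := fun h => hφβ (by rw [dotR_comm]; exact h)
        have hβφ1 : β ≠ φ := fun h => hφB (h ▸ hβB)
        have hβφ2 : β ≠ -φ := by
          intro h; apply hφB
          have e : φ = -β := by rw [h]; abel
          rw [e]; exact B.neg_mem hβB
        obtain ⟨k2, hk2, hk2d, hγ'Φ⟩ := root_step hRS hADE hφΦ hβΦ hβφ hβφ1 hβφ2
        have hk2k : k2 * k2 = 1 := by rcases hk2 with rfl|rfl <;> norm_num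
        set γ' := β - k2 • φ with hγ'def
        have hγ'A : γ' ∉ A := by
          intro h; apply hβA
          have e : β = γ' + k2 • φ := by rw [hγ'def]; abel
          rw [e]; exact A.add_mem h (A.smul_mem k2 hφA)
        have hγ'B : γ' ∉ B := by
          intro h; apply hφB
          apply smul_mem_iff' hk2
          have e : k2 • φ = β - γ' := by rw [hγ'def]; abel
          rw [e]; exact B.sub_mem hβB h
        have hγ'C : γ' ∈ C := by
          rcases hcov γ' hγ'Φ with h|h|h; exacts [absurd h hγ'A, absurd h hγ'B, h]
        have hφφL : dotR φ φ = L := hADE' φ hφΦ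
        have hk2d' : dotR β φ = k2 * L / 2 := by rw [hk2d, hφφL]
        have hββL : dotR β β = L := hADE' β hβΦ
        have hky : dotR γ' γ = (k * k2 * k1) * L / 2 := by
          rw [hγ'def, hγdef]
          simp only [dotR_sub_left, dotR_sub_right, dotR_smul_left, dotR_smul_right]
          rw [hββL, hkd, dotR_comm φ β, hk2d', hk1d]
          rcases hk with rfl|rfl <;> rcases hk2 with rfl|rfl <;> ring
        have hk3 : k * k2 * k1 = 1 ∨ k * k2 * k1 = -1 := by
          rcases hk with rfl|rfl <;> rcases hk1 with rfl|rfl <;>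
            rcases hk2 with rfl|rfl <;> norm_num
        have hγγL : dotR γ γ = L := hADE' γ hγΦ
        have hmemξ := hRS.2.2.1 γ hγΦ γ' hγ'Φ
        have hcoef : 2 * dotR γ' γ / dotR γ γ = k * k2 * k1 := by
          rw [hky, hγγL]; field_simp
        rw [hcoef] at hmemξ
        rcases hk3 with h3 | h3
        · rw [h3, one_smul] at hmemξ
          have hξC : γ' - γ ∈ C := C.sub_mem hγ'C hγC
          have hξA : γ' - γ ∈ A := by
            have e : γ' - γ = k • α - k2 • φ := by rw [hγ'def, hγdef]; abel
            rw [e]; exact A.sub_mem (A.smul_mem k hαA) (A.smul_mem k2 hφA)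
          have hξT : γ' - γ ∈ T := hACT ⟨hξA, hξC⟩
          have e2 : k • α - (γ' - γ) = k2 • φ := by rw [hγ'def, hγdef]; abel
          have hm := T.smul_mem k2 (T.sub_mem (T.smul_mem k hαT) hξT)
          rw [e2, smul_smul, hk2k, one_smul] at hm
          exact hm
        · rw [h3] at hmemξ
          have e3 : γ' - (-1 : ℝ) • γ = γ' + γ := by
            rw [neg_smul, one_smul, sub_neg_eq_add]
          rw [e3] at hmemξ
          have hηβ : dotR (γ' + γ) β = L := by
            rw [hγ'def, hγdef]
            simp only [dotR_add_left, dotR_sub_left, dotR_smul_left]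
            rw [hββL, dotR_comm φ β, hk2d', dotR_comm α β, hkd]
            rcases hk with rfl|rfl <;> rcases hk2 with rfl|rfl <;> ring
          have hηL : dotR (γ' + γ) (γ' + γ) = L := hADE' _ hmemξ
          have hzero : dotR ((γ' + γ) - β) ((γ' + γ) - β) = 0 := by
            rw [dotR_sub_left, dotR_sub_right, dotR_sub_right, hηL, hηβ,
              dotR_comm β (γ' + γ), hηβ, hββL]
            ring
          have hηeq : γ' + γ = β := by
            have := dotR_self_eq_zero hzero; rwa [sub_eq_zero] at this
          exfalso; apply hβA
          have h5 : β - (k2 • φ + k • α) = ((β - k2 • φ) + (β - k • α)) - β := by abel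
          rw [← hγ'def, ← hγdef, hηeq, sub_self] at h5
          have e4 : β = k2 • φ + k • α := sub_eq_zero.1 h5
          rw [e4]; exact A.add_mem (A.smul_mem k2 hφA) (A.smul_mem k hαA)
    · have hφC : φ ∈ C := by
        rcases hcov φ hφΦ with h|h|h; exacts [absurd h hφA, absurd h hφB, h]
      have h1 : φ ≠ α := fun h => hφA (h ▸ hαA)
      have h2 : φ ≠ -α := fun h => hφA (h ▸ A.neg_mem hαA)
      obtain ⟨k', hk', -, hδΦ⟩ := root_step hRS hADE hαΦ hφΦ hφα h1 h2
      set δ := φ - k' • α with hδdef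
      have hδA : δ ∉ A := by
        intro h; apply hφA
        have e : φ = δ + k' • α := by rw [hδdef]; abel
        rw [e]; exact A.add_mem h (A.smul_mem k' hαA)
      have hδC : δ ∉ C := by
        intro h; apply hαC
        apply smul_mem_iff' hk'
        have e : k' • α = φ - δ := by rw [hδdef]; abel
        rw [e]; exact C.sub_mem hφC h
      have hδB : δ ∈ B := by
        rcases hcov δ hδΦ with h|h|h; exacts [absurd h hδA, h, absurd h hδC]
      have e : φ = δ + k' • α := by rw [hδdef]; abel
      rw [e]; exact T.add_mem (hBT hδB) (T.smul_mem k' hαT)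
  have hF := span_compl hRS hirr hADE hZtop
  have hTtop : T = ⊤ := by
    apply top_unique
    rw [← hF]
    apply Submodule.span_le.2
    rintro φ ⟨h1, h2⟩
    exact SetLike.mem_coe.2 (claim φ h1 h2)
  have hd1 : finrank ℝ (Fin d → ℝ) = d := by
    rw [Module.finrank_pi]; exact Fintype.card_fin d
  have hfT : finrank ℝ ↥T = d := by rw [hTtop, finrank_top, hd1]
  have hchain : finrank ℝ ↥T ≤ 1 + finrank ℝ B + finrank ℝ ↥(A ⊓ C) := by
    rw [hTdef]
    have h1 := finrank_sup_le' (Submodule.span ℝ {α} ⊔ B) (A ⊓ C)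
    have h2 := finrank_sup_le' (Submodule.span ℝ {α}) B
    have h3 : finrank ℝ ↥(Submodule.span ℝ {α}) = 1 := finrank_span_singleton hα0
    omega
  have hACd := Submodule.finrank_sup_add_finrank_inf_eq A C
  rw [hAC, finrank_top, hd1] at hACd
  omega

lemma two_cover_false (hRS : IsRootSystem Φ) (hirr : IsIrreducibleRS Φ)
    (hADE : ∀ α ∈ Φ, ∀ β ∈ Φ, dotR α α = dotR β β)
    {V W : Submodule ℝ (Fin d → ℝ)}
    (hV : V ≠ ⊤) (hW : W ≠ ⊤) (hcov : ∀ φ ∈ Φ, φ ∈ V ∨ φ ∈ W) : False := by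
  apply hW
  apply top_unique
  rw [← span_compl hRS hirr hADE hV]
  apply Submodule.span_le.2
  rintro φ ⟨h1, h2⟩
  rcases hcov φ h1 with h | h
  · exact absurd h h2
  · exact h

/-- the exclusive-root set of `V` relative to the other parts `T` -/
def Xs (Φ : Finset (Fin d → ℝ)) (V : Submodule ℝ (Fin d → ℝ))
    (T : Multiset (Submodule ℝ (Fin d → ℝ))) : Set (Fin d → ℝ) :=
  {φ | φ ∈ Φ ∧ φ ∈ V ∧ ∀ W ∈ T, φ ∉ W}

lemma key (hd2 : 2 ≤ d) (hRS : IsRootSystem Φ) (hirr : IsIrreducibleRS Φ)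
    (hADE : ∀ α ∈ Φ, ∀ β ∈ Φ, dotR α α = dotR β β) :
    ∀ μ : ℕ, ∀ S : Multiset (Submodule ℝ (Fin d → ℝ)),
      (Multiset.map (fun V : Submodule ℝ (Fin d → ℝ) => finrank ℝ ↥V + 1) S).sum = μ →
      (∀ V ∈ S, V ≠ ⊤) →
      (∀ φ ∈ Φ, ∃ V ∈ S, φ ∈ V) →
      2 * d - 1 ≤ (Multiset.map (fun V : Submodule ℝ (Fin d → ℝ) => finrank ℝ ↥V) S).sum := by
  intro μ
  induction μ using Nat.strong_induction_on with
  | _ μ IH =>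
  intro S hμ hproper hcover
  classical
  by_contra hlt
  push_neg at hlt
  have hsum2 : (Multiset.map (fun V : Submodule ℝ (Fin d → ℝ) => finrank ℝ ↥V) S).sum + 2 ≤ 2 * d := by omega
  have hd1 : finrank ℝ (Fin d → ℝ) = d := by
    rw [Module.finrank_pi]; exact Fintype.card_fin d
  -- Φ is nonempty
  have hΦne : ∃ ρ, ρ ∈ Φ := by
    by_contra h; push_neg at h
    have he : (Φ : Set (Fin d → ℝ)) = ∅ := by
      ext x; simp only [Finset.coe_sort_coe, Finset.mem_coe, Set.mem_empty_iff_false, iff_false]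
      exact h x
    have h2 := hRS.2.1
    rw [he, Submodule.span_empty] at h2
    have h3 : finrank ℝ ↥(⊥ : Submodule ℝ (Fin d → ℝ))
        = finrank ℝ ↥(⊤ : Submodule ℝ (Fin d → ℝ)) := by rw [h2]
    rw [finrank_bot, finrank_top, hd1] at h3
    omega
  obtain ⟨ρ, hρ⟩ := hΦne
  -- merge case
  by_cases hM : ∃ V ∈ S, ∃ W ∈ S.erase V, V ⊔ W ≠ ⊤
  · obtain ⟨V, hVS, W, hWE, hVW⟩ := hM
    obtain ⟨T1, hT1⟩ := Multiset.exists_cons_of_mem hVS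
    have hT1e : S.erase V = T1 := by rw [hT1, Multiset.erase_cons_head]
    rw [hT1e] at hWE
    obtain ⟨T2, hT2⟩ := Multiset.exists_cons_of_mem hWE
    have hfsup := finrank_sup_le' V W
    have hmain := IH ((Multiset.map (fun U : Submodule ℝ (Fin d → ℝ) => finrank ℝ ↥U + 1) ((V ⊔ W) ::ₘ T2)).sum)
      ?_ ((V ⊔ W) ::ₘ T2) rfl ?_ ?_
    · rw [hT1, hT2] at hlt
      simp only [Multiset.map_cons, Multiset.sum_cons] at hlt hmain
      omega
    · rw [← hμ, hT1, hT2]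
      simp only [Multiset.map_cons, Multiset.sum_cons]
      omega
    · intro U hU
      rcases Multiset.mem_cons.1 hU with rfl | hU'
      · exact hVW
      · apply hproper
        rw [hT1, hT2]
        exact Multiset.mem_cons_of_mem (Multiset.mem_cons_of_mem hU')
    · intro φ hφ
      obtain ⟨U, hU, hφU⟩ := hcover φ hφ
      rw [hT1, hT2] at hU
      rcases Multiset.mem_cons.1 hU with rfl | hU'
      · exact ⟨U ⊔ W, Multiset.mem_cons_self _ _, (le_sup_left : U ≤ U ⊔ W) hφU⟩
      · rcases Multiset.mem_cons.1 hU' with rfl | hU''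
        · exact ⟨V ⊔ U, Multiset.mem_cons_self _ _, (le_sup_right : U ≤ V ⊔ U) hφU⟩
        · exact ⟨U, Multiset.mem_cons_of_mem hU'', hφU⟩
  · push_neg at hM
    -- hM : pairwise sups are ⊤
    rcases hcard : Multiset.card S with _ | _ | _ | _ | m4
    · -- card 0
      rw [Multiset.card_eq_zero] at hcard
      obtain ⟨U, hU, -⟩ := hcover ρ hρ
      rw [hcard] at hU
      simp at hU
    · -- card 1
      obtain ⟨V, rfl⟩ := Multiset.card_eq_one.1 hcard
      apply hproper V (Multiset.mem_singleton_self V)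
      apply top_unique
      rw [← hRS.2.1]
      apply Submodule.span_le.2
      intro φ hφ
      obtain ⟨U, hU, hφU⟩ := hcover φ hφ
      rw [Multiset.mem_singleton] at hU
      rw [← hU]; exact hφU
    · -- card 2
      obtain ⟨V, W, rfl⟩ := Multiset.card_eq_two.1 hcard
      refine two_cover_false hRS hirr hADE (V := V) (W := W) ?_ ?_ ?_
      · exact hproper V (by simp)
      · exact hproper W (by simp)
      · intro φ hφ
        obtain ⟨U, hU, hφU⟩ := hcover φ hφ
        rcases Multiset.mem_cons.1 hU with rfl | hU'
        · exact Or.inl hφU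
        · rw [Multiset.mem_singleton] at hU'
          subst hU'; exact Or.inr hφU
    · -- card 3 : the master case
      have hcard3 : Multiset.card S = 3 := by omega
      by_cases hSh : ∃ V T', S = V ::ₘ T' ∧ Submodule.span ℝ (Xs Φ V T') ≠ V
      · obtain ⟨V, T', hST, hne⟩ := hSh
        set V' := Submodule.span ℝ (Xs Φ V T') with hV'
        have hle : V' ≤ V := Submodule.span_le.2 (fun φ hφ => hφ.2.1)
        have hVS : V ∈ S := by rw [hST]; exact Multiset.mem_cons_self _ _
        have hrk : finrank ℝ V' < finrank ℝ V := by
          refine lt_of_le_of_ne (Submodule.finrank_mono hle) (fun h => hne ?_)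
          exact Submodule.eq_of_le_of_finrank_le hle (le_of_eq h.symm)
        have hmain := IH ((Multiset.map
            (fun U : Submodule ℝ (Fin d → ℝ) => finrank ℝ ↥U + 1) (V' ::ₘ T')).sum)
          ?_ (V' ::ₘ T') rfl ?_ ?_
        · rw [hST] at hlt
          simp only [Multiset.map_cons, Multiset.sum_cons] at hlt hmain
          omega
        · rw [← hμ, hST]
          simp only [Multiset.map_cons, Multiset.sum_cons]
          omega
        · intro U hU
          rcases Multiset.mem_cons.1 hU with rfl | hU'
          · intro htop
            apply hproper V hVS
            rw [htop] at hle
            exact top_unique hle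
          · exact hproper U (by rw [hST]; exact Multiset.mem_cons_of_mem hU')
        · intro φ hφ
          obtain ⟨U, hU, hφU⟩ := hcover φ hφ
          rw [hST] at hU
          rcases Multiset.mem_cons.1 hU with rfl | hU'
          · by_cases hex : ∀ W ∈ T', φ ∉ W
            · exact ⟨V', Multiset.mem_cons_self _ _, Submodule.subset_span ⟨hφ, hφU, hex⟩⟩
            · push_neg at hex
              obtain ⟨W, hW, hφW⟩ := hex
              exact ⟨W, Multiset.mem_cons_of_mem hW, hφW⟩
          · exact ⟨U, Multiset.mem_cons_of_mem hU', hφU⟩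
      · push_neg at hSh
        obtain ⟨A, B, C, rfl⟩ := Multiset.card_eq_three.1 hcard3
        have hSA : ({A, B, C} : Multiset (Submodule ℝ (Fin d → ℝ))) = A ::ₘ {B, C} := rfl
        have hSB : ({A, B, C} : Multiset (Submodule ℝ (Fin d → ℝ))) = B ::ₘ {A, C} :=
          Multiset.cons_swap A B {C}
        have hSC : ({A, B, C} : Multiset (Submodule ℝ (Fin d → ℝ))) = C ::ₘ {A, B} := by
          show A ::ₘ B ::ₘ C ::ₘ 0 = C ::ₘ A ::ₘ B ::ₘ 0
          rw [Multiset.cons_swap B C, Multiset.cons_swap A C]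
        have hA := hSh A {B, C} hSA
        have hB := hSh B {A, C} hSB
        have hC := hSh C {A, B} hSC
        have hmemA : A ∈ ({A, B, C} : Multiset (Submodule ℝ (Fin d → ℝ))) :=
          Multiset.mem_cons_self _ _
        have hmemB : B ∈ ({A, B, C} : Multiset (Submodule ℝ (Fin d → ℝ))) := by simp
        have hmemC : C ∈ ({A, B, C} : Multiset (Submodule ℝ (Fin d → ℝ))) := by simp
        have hFAB : A ⊔ B = ⊤ := by
          apply hM A hmemA
          rw [hSA, Multiset.erase_cons_head]; simp
        have hFAC : A ⊔ C = ⊤ := by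
          apply hM A hmemA
          rw [hSA, Multiset.erase_cons_head]; simp
        have hFBA : B ⊔ A = ⊤ := by rw [sup_comm]; exact hFAB
        have hFBC : B ⊔ C = ⊤ := by
          apply hM B hmemB
          rw [hSB, Multiset.erase_cons_head]; simp
        have hcov3 : ∀ φ ∈ Φ, φ ∈ A ∨ φ ∈ B ∨ φ ∈ C := by
          intro φ hφ
          obtain ⟨U, hU, hφU⟩ := hcover φ hφ
          simp only [Multiset.insert_eq_cons, Multiset.mem_cons,
            Multiset.mem_singleton] at hU
          rcases hU with rfl | rfl | rfl
          exacts [Or.inl hφU, Or.inr (Or.inl hφU), Or.inr (Or.inr hφU)]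
        have hXA : ∀ φ, φ ∈ Xs Φ A {B, C} ↔ φ ∈ Φ ∧ φ ∈ A ∧ φ ∉ B ∧ φ ∉ C := by
          intro φ
          constructor
          · rintro ⟨h1, h2, h3⟩
            exact ⟨h1, h2, h3 B (by simp), h3 C (by simp)⟩
          · rintro ⟨h1, h2, h3, h4⟩
            refine ⟨h1, h2, fun W hW => ?_⟩
            simp only [Multiset.insert_eq_cons, Multiset.mem_cons,
              Multiset.mem_singleton] at hW
            rcases hW with rfl | rfl
            exacts [h3, h4]
        have hXB : ∀ φ, φ ∈ Xs Φ B {A, C} ↔ φ ∈ Φ ∧ φ ∈ B ∧ φ ∉ A ∧ φ ∉ C := by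
          intro φ
          constructor
          · rintro ⟨h1, h2, h3⟩
            exact ⟨h1, h2, h3 A (by simp), h3 C (by simp)⟩
          · rintro ⟨h1, h2, h3, h4⟩
            refine ⟨h1, h2, fun W hW => ?_⟩
            simp only [Multiset.insert_eq_cons, Multiset.mem_cons,
              Multiset.mem_singleton] at hW
            rcases hW with rfl | rfl
            exacts [h3, h4]
        have hXC : ∀ φ, φ ∈ Xs Φ C {A, B} ↔ φ ∈ Φ ∧ φ ∈ C ∧ φ ∉ A ∧ φ ∉ B := by
          intro φ
          constructor
          · rintro ⟨h1, h2, h3⟩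
            exact ⟨h1, h2, h3 A (by simp), h3 B (by simp)⟩
          · rintro ⟨h1, h2, h3, h4⟩
            refine ⟨h1, h2, fun W hW => ?_⟩
            simp only [Multiset.insert_eq_cons, Multiset.mem_cons,
              Multiset.mem_singleton] at hW
            rcases hW with rfl | rfl
            exacts [h3, h4]
        have hsum3 : finrank ℝ A + finrank ℝ B + finrank ℝ C + 2 ≤ 2 * d := by
          simp only [Multiset.insert_eq_cons, Multiset.map_cons, Multiset.sum_cons,
            Multiset.map_singleton, Multiset.sum_singleton] at hsum2
          omega
        have hprB : B ≠ ⊤ := hproper B hmemB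
        have hprC : C ≠ ⊤ := hproper C hmemC
        have hprA : A ≠ ⊤ := hproper A hmemA
        have hXAne : (Xs Φ A {B, C}).Nonempty := by
          rw [Set.nonempty_iff_ne_empty]
          intro h
          rw [h, Submodule.span_empty] at hA
          refine two_cover_false hRS hirr hADE hprB hprC ?_
          intro φ hφ
          rcases hcov3 φ hφ with h1 | h1 | h1
          · rw [← hA] at h1
            exact absurd ((Submodule.mem_bot ℝ).1 h1) (hRS.1 φ hφ)
          · exact Or.inl h1
          · exact Or.inr h1
        have hXBne : (Xs Φ B {A, C}).Nonempty := by
          rw [Set.nonempty_iff_ne_empty]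
          intro h
          rw [h, Submodule.span_empty] at hB
          refine two_cover_false hRS hirr hADE hprA hprC ?_
          intro φ hφ
          rcases hcov3 φ hφ with h1 | h1 | h1
          · exact Or.inl h1
          · rw [← hB] at h1
            exact absurd ((Submodule.mem_bot ℝ).1 h1) (hRS.1 φ hφ)
          · exact Or.inr h1
        have hXCne : (Xs Φ C {A, B}).Nonempty := by
          rw [Set.nonempty_iff_ne_empty]
          intro h
          rw [h, Submodule.span_empty] at hC
          refine two_cover_false hRS hirr hADE hprA hprB ?_
          intro φ hφ
          rcases hcov3 φ hφ with h1 | h1 | h1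
          · exact Or.inl h1
          · exact Or.inr h1
          · rw [← hC] at h1
            exact absurd ((Submodule.mem_bot ℝ).1 h1) (hRS.1 φ hφ)
        by_cases cAB : ∃ x ∈ Xs Φ A {B, C}, ∃ y ∈ Xs Φ B {A, C}, dotR y x ≠ 0
        · obtain ⟨x, hx, y, hy, hdxy⟩ := cAB
          obtain ⟨hx1, hx2, hx3, hx4⟩ := (hXA x).1 hx
          obtain ⟨hy1, hy2, hy3, hy4⟩ := (hXB y).1 hy
          have := master_core hRS hirr hADE hFAC hcov3 hx1 hx2 hx3 hx4
            hy1 hy2 hy3 hy4 hdxy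
          omega
        by_cases cAC : ∃ x ∈ Xs Φ A {B, C}, ∃ z ∈ Xs Φ C {A, B}, dotR z x ≠ 0
        · obtain ⟨x, hx, z, hz, hdxz⟩ := cAC
          obtain ⟨hx1, hx2, hx3, hx4⟩ := (hXA x).1 hx
          obtain ⟨hz1, hz2, hz3, hz4⟩ := (hXC z).1 hz
          have hcov3' : ∀ φ ∈ Φ, φ ∈ A ∨ φ ∈ C ∨ φ ∈ B := by
            intro φ hφ
            rcases hcov3 φ hφ with h | h | h
            exacts [Or.inl h, Or.inr (Or.inr h), Or.inr (Or.inl h)]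
          have := master_core hRS hirr hADE hFAB hcov3' hx1 hx2 hx4 hx3
            hz1 hz2 hz3 hz4 hdxz
          omega
        by_cases cBC : ∃ y ∈ Xs Φ B {A, C}, ∃ z ∈ Xs Φ C {A, B}, dotR z y ≠ 0
        · obtain ⟨y, hy, z, hz, hdyz⟩ := cBC
          obtain ⟨hy1, hy2, hy3, hy4⟩ := (hXB y).1 hy
          obtain ⟨hz1, hz2, hz3, hz4⟩ := (hXC z).1 hz
          have hcov3' : ∀ φ ∈ Φ, φ ∈ B ∨ φ ∈ C ∨ φ ∈ A := by
            intro φ hφ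
            rcases hcov3 φ hφ with h | h | h
            exacts [Or.inr (Or.inr h), Or.inl h, Or.inr (Or.inl h)]
          have := master_core hRS hirr hADE hFBA hcov3' hy1 hy2 hy4 hy3
            hz1 hz2 hz4 hz3 hdyz
          omega
        · push_neg at cAB cAC cBC
          obtain ⟨z0, hz0⟩ := hXCne
          obtain ⟨hz01, hz02, hz03, hz04⟩ := (hXC z0).1 hz0
          have hzA : ∀ v, v ∈ A → dotR z0 v = 0 := by
            intro v hv
            rw [← hA] at hv
            refine dotR_span_zero ?_ hv
            intro w hw
            exact cAC w hw z0 hz0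
          have hzB : ∀ v, v ∈ B → dotR z0 v = 0 := by
            intro v hv
            rw [← hB] at hv
            refine dotR_span_zero ?_ hv
            intro w hw
            exact cBC w hw z0 hz0
          have hztop : z0 ∈ (⊤ : Submodule ℝ (Fin d → ℝ)) := trivial
          rw [← hFAB] at hztop
          obtain ⟨u, hu, v, hv, huv⟩ := Submodule.mem_sup.1 hztop
          have hzz : dotR z0 (u + v) = 0 := by
            rw [dotR_add_right, hzA u hu, hzB v hv, add_zero]
          rw [huv] at hzz
          exact hRS.1 z0 hz01 (dotR_self_eq_zero hzz)
    · -- card ≥ 4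
      have h1 : 0 < Multiset.card S := by omega
      obtain ⟨a, ha⟩ := Multiset.card_pos_iff_exists_mem.1 h1
      obtain ⟨T1, rfl⟩ := Multiset.exists_cons_of_mem ha
      have hc1 : 0 < Multiset.card T1 := by
        simp only [Multiset.card_cons] at hcard; omega
      obtain ⟨b, hb⟩ := Multiset.card_pos_iff_exists_mem.1 hc1
      obtain ⟨T2, rfl⟩ := Multiset.exists_cons_of_mem hb
      have hc2 : 0 < Multiset.card T2 := by
        simp only [Multiset.card_cons] at hcard; omega
      obtain ⟨c, hc⟩ := Multiset.card_pos_iff_exists_mem.1 hc2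
      obtain ⟨T3, rfl⟩ := Multiset.exists_cons_of_mem hc
      have hc3 : 0 < Multiset.card T3 := by
        simp only [Multiset.card_cons] at hcard; omega
      obtain ⟨e, he⟩ := Multiset.card_pos_iff_exists_mem.1 hc3
      obtain ⟨T4, rfl⟩ := Multiset.exists_cons_of_mem he
      set S := a ::ₘ b ::ₘ c ::ₘ e ::ₘ T4 with hS
      have hab : a ⊔ b = ⊤ := by
        apply hM a (Multiset.mem_cons_self _ _)
        rw [hS, Multiset.erase_cons_head]
        exact Multiset.mem_cons_self _ _
      have hce : c ⊔ e = ⊤ := by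
        apply hM c (by simp [hS])
        rw [hS]
        by_cases hca : a = c
        · subst hca; rw [Multiset.erase_cons_head]; simp
        · rw [Multiset.erase_cons_tail _ hca]
          by_cases hcb : b = c
          · subst hcb; rw [Multiset.erase_cons_head]; simp
          · rw [Multiset.erase_cons_tail _ hcb, Multiset.erase_cons_head]
            simp
      have hab' : d ≤ finrank ℝ a + finrank ℝ b := by
        have := finrank_sup_le' a b
        rw [hab, finrank_top, hd1] at this
        omega
      have hce' : d ≤ finrank ℝ c + finrank ℝ e := by
        have := finrank_sup_le' c e
        rw [hce, finrank_top, hd1] at this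
        omega
      rw [hS] at hsum2
      simp only [Multiset.map_cons, Multiset.sum_cons] at hsum2
      omega

end Stmt5

open Stmt5 in
/-- For a simply-laced (ADE) irreducible root system of rank `n ≥ 2`, every
type-2 decomposition `Φ = Φ_1 ∪ ⋯ ∪ Φ_{s+t}` satisfies `Σ rank Φ_l ≥ 2n − 1`. -/
theorem stmt5 {n : ℕ} (hn : 2 ≤ n) (Φ : Finset (Fin n → ℝ))
    (hRS : IsRootSystem Φ) (hred : IsReducedRS Φ) (hirr : IsIrreducibleRS Φ)
    (hADE : ∀ α ∈ Φ, ∀ β ∈ Φ, dotR α α = dotR β β)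
    (s t : ℕ) (hst : 2 ≤ s + t) (P : Fin (s + t) → Set (Fin n → ℝ))
    (hne : ∀ l, (P l).Nonempty)
    (hproper : ∀ l, P l ⊂ (Φ : Set (Fin n → ℝ)))
    (hunion : (⋃ l, P l) = (Φ : Set (Fin n → ℝ)))
    (hspan : ∀ l, (Φ : Set (Fin n → ℝ)) ∩ ↑(Submodule.span ℝ (P l)) = P l)
    (hdisjT : ∀ j j' : Fin (s + t), s ≤ j.val → s ≤ j'.val → j ≠ j' → Disjoint (P j) (P j'))
    (hdisjST : ∀ k j : Fin (s + t), k.val < s → s ≤ j.val → Disjoint (P k) (P j)) :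
    2 * n - 1 ≤ ∑ l, Module.finrank ℝ ↥(Submodule.span ℝ (P l)) := by
  classical
  have hkey := key (Φ := Φ) hn hRS hirr hADE
    ((Multiset.map (fun V : Submodule ℝ (Fin n → ℝ) => Module.finrank ℝ ↥V + 1)
      (Multiset.map (fun l => Submodule.span ℝ (P l)) Finset.univ.val)).sum)
    (Multiset.map (fun l => Submodule.span ℝ (P l)) Finset.univ.val) rfl ?_ ?_
  · rw [Multiset.map_map] at hkey
    exact hkey
  · intro V hV
    obtain ⟨l, -, rfl⟩ := Multiset.mem_map.1 hV
    intro htop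
    have h1 := hspan l
    rw [htop] at h1
    simp only [Submodule.top_coe, Set.inter_univ] at h1
    exact absurd h1.symm (hproper l).ne
  · intro φ hφ
    have hm : φ ∈ ⋃ l, P l := by rw [hunion]; exact hφ
    obtain ⟨l, hl⟩ := Set.mem_iUnion.1 hm
    exact ⟨Submodule.span ℝ (P l), Multiset.mem_map.2 ⟨l, by simp, rfl⟩,
      Submodule.subset_span hl⟩

end
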